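/- Let G = (V,E;w) be a finite simple undirected graph with positive vertex weights, let α* be its minimal α-ratio, and for α ≥ 0 define cap⁺(G,α) = min over nonempty B ⊆ V of [α·(w(V) − w(B)) + w(Γ(B))]. Then: (1) cap⁺(G,α) < α·w(V) if and only if α > α*; (2) cap⁺(G,α) = α·w(V) if and only if α = α*; (3) cap⁺(G,α) > α·w(V) if and only if α < α*. -/

import Mathlib

open Finset

/-- The total weight of a finite set of vertices. -/
def wsum {V : Type*} (w : V → ℝ) (S : Finset V) : ℝ := ∑ v ∈ S, w v

/-- The neighborhood `Γ(S)` of a set `S` of vertices: all vertices adjacent to at least one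
vertex of `S`. -/
def nbhd {V : Type*} [Fintype V] [DecidableEq V] (G : SimpleGraph V) [DecidableRel G.Adj]
    (S : Finset V) : Finset V :=
  univ.filter fun v => ∃ u ∈ S, G.Adj u v

/-- The α-ratio `α(S) = w(Γ(S)) / w(S)` of a set `S`. -/
noncomputable def alphaR {V : Type*} [Fintype V] [DecidableEq V] (G : SimpleGraph V)
    [DecidableRel G.Adj] (w : V → ℝ) (S : Finset V) : ℝ :=
  wsum w (nbhd G S) / wsum w S

/-
For nonempty `B`, the cut value minus `α·w(V)` equals `w(B)·(α(B) − α)`, and `w(B) > 0`.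
So a set `B` gives a cut below (above) `α·w(V)` exactly when its α-ratio is below (above) `α`;
minimising over `B` on both sides compares `cap⁺(G,α)` with `α·w(V)` as `α*` compares with `α`.
-/

theorem wsum_pos {V : Type*} {w : V → ℝ} (hw : ∀ v, 0 < w v) {S : Finset V} (hS : S.Nonempty) :
    0 < wsum w S :=
  Finset.sum_pos (fun v _ => hw v) hS

theorem cut_sub_eq_wsum_mul_alphaR_sub {V : Type*} [Fintype V] [DecidableEq V]
    (G : SimpleGraph V) [DecidableRel G.Adj] (w : V → ℝ) (a : ℝ) {S : Finset V}
    (hS : wsum w S ≠ 0) :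
    a * (wsum w univ - wsum w S) + wsum w (nbhd G S) - a * wsum w univ =
      wsum w S * (alphaR G w S - a) := by
  rw [alphaR, mul_sub (wsum w S), mul_div_cancel₀ _ hS]
  ring

section IsLeast

variable {ι : Type*} {P : ι → Prop} {p q r : ι → ℝ} {a b m c : ℝ}

theorem isLeast_lt_iff_of_sub_eq_mul (hp : ∀ i, P i → 0 < p i)
    (hq : ∀ i, P i → q i - b = p i * (r i - a))
    (hm : IsLeast {x | ∃ i, P i ∧ x = r i} m) (hc : IsLeast {x | ∃ i, P i ∧ x = q i} c) :
    c < b ↔ m < a := by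
  obtain ⟨⟨i, hi, rfl⟩, hm_le⟩ := hm
  obtain ⟨⟨j, hj, rfl⟩, hc_le⟩ := hc
  constructor
  · intro hlt
    have hneg : p j * (r j - a) < 0 := by rw [← hq j hj]; linarith
    linarith [hm_le ⟨j, hj, rfl⟩, neg_of_mul_neg_right hneg (hp j hj).le]
  · intro hlt
    have hneg : p i * (r i - a) < 0 := mul_neg_of_pos_of_neg (hp i hi) (by linarith)
    linarith [hc_le ⟨i, hi, rfl⟩, hq i hi]

theorem lt_isLeast_iff_of_sub_eq_mul (hp : ∀ i, P i → 0 < p i)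
    (hq : ∀ i, P i → q i - b = p i * (r i - a))
    (hm : IsLeast {x | ∃ i, P i ∧ x = r i} m) (hc : IsLeast {x | ∃ i, P i ∧ x = q i} c) :
    b < c ↔ a < m := by
  obtain ⟨⟨i, hi, rfl⟩, hm_le⟩ := hm
  obtain ⟨⟨j, hj, rfl⟩, hc_le⟩ := hc
  constructor
  · intro hlt
    have hpos : 0 < p i * (r i - a) := by linarith [hc_le ⟨i, hi, rfl⟩, hq i hi]
    linarith [pos_of_mul_pos_right hpos (hp i hi).le]
  · intro hlt
    have hpos : 0 < p j * (r j - a) :=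
      mul_pos (hp j hj) (by linarith [hm_le ⟨j, hj, rfl⟩])
    linarith [hq j hj]

end IsLeast

theorem capPlus_vs_alphaStar_general {V : Type*} [Fintype V] [DecidableEq V]
    (G : SimpleGraph V) [DecidableRel G.Adj] (w : V → ℝ) (hw : ∀ v, 0 < w v)
    (a astar capa : ℝ)
    (hstar : IsLeast {r : ℝ | ∃ S : Finset V, S.Nonempty ∧ r = alphaR G w S} astar)
    (hcap : IsLeast {c : ℝ | ∃ B : Finset V, B.Nonempty ∧
        c = a * (wsum w univ - wsum w B) + wsum w (nbhd G B)} capa) :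
    (capa < a * wsum w univ ↔ astar < a) ∧
    (capa = a * wsum w univ ↔ a = astar) ∧
    (a * wsum w univ < capa ↔ a < astar) := by
  have hp : ∀ S : Finset V, S.Nonempty → 0 < wsum w S := fun S hS => wsum_pos hw hS
  have hq : ∀ S : Finset V, S.Nonempty →
      a * (wsum w univ - wsum w S) + wsum w (nbhd G S) - a * wsum w univ =
        wsum w S * (alphaR G w S - a) :=
    fun S hS => cut_sub_eq_wsum_mul_alphaR_sub G w a (hp S hS).ne'
  have hlt := isLeast_lt_iff_of_sub_eq_mul hp hq hstar hcap
  have hgt := lt_isLeast_iff_of_sub_eq_mul hp hq hstar hcap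
  refine ⟨hlt, ?_, hgt⟩
  rw [le_antisymm_iff, le_antisymm_iff, ← not_lt, ← not_lt, hlt, hgt, not_lt, not_lt, and_comm]

/-- let `α* = capα` denote the minimal α-ratio and
`cap⁺(G,α) = min_{∅ ≠ B ⊆ V} [α·(w(V) − w(B)) + w(Γ(B))]`.  Then `cap⁺(G,α) < α·w(V)` iff
`α > α*`, `cap⁺(G,α) = α·w(V)` iff `α = α*`, and `cap⁺(G,α) > α·w(V)` iff `α < α*`. -/
theorem capPlus_vs_alphaStar {V : Type*} [Fintype V] [DecidableEq V]
    (G : SimpleGraph V) [DecidableRel G.Adj] (w : V → ℝ) (hw : ∀ v, 0 < w v)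
    (a astar capa : ℝ) (ha : 0 ≤ a)
    (hstar : IsLeast {r : ℝ | ∃ S : Finset V, S.Nonempty ∧ r = alphaR G w S} astar)
    (hcap : IsLeast {c : ℝ | ∃ B : Finset V, B.Nonempty ∧
        c = a * (wsum w univ - wsum w B) + wsum w (nbhd G B)} capa) :
    (capa < a * wsum w univ ↔ astar < a) ∧
    (capa = a * wsum w univ ↔ a = astar) ∧
    (a * wsum w univ < capa ↔ a < astar) :=
  capPlus_vs_alphaStar_general G w hw a astar capa hstar hcap
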